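/- In every execution of the Hemlock transition-system model, for every lock L and every reachable state in which Tail L = none, there is no thread that has executed the entry doorstep for L but has not yet performed the CAS step of the exit code for L; in particular, no thread is in the critical section protected by L at that state. -/

import Mathlib

namespace Hemlock

/-- Program counter locations of a thread in the Hemlock algorithm. -/
inductive PC where
  | remainder  -- in the remainder section
  | entrySpin  -- in the entry code, spinning on the predecessor's Grant field
  | crit       -- in the critical section
  | exitCAS    -- in the exit code, about to perform the CAS on Tail
  | exitDoor   -- in the exit code, about to perform the exit doorstep (write Grant self := some L)
  | exitSpin   -- in the exit code, spinning on its own Grant field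
deriving DecidableEq

/-- A global state of the Hemlock transition system. -/
structure St (Thread Lock : Type) where
  Tail : Lock → Option Thread        -- the Tail field of each lock
  Grant : Thread → Option Lock       -- the Grant field of each thread
  pc : Thread → PC                   -- program counter of each thread
  lk : Thread → Option Lock          -- the lock currently being acquired/released by each thread
  pred : Thread → Option Thread      -- value returned by each thread's last SWAP

variable {Thread Lock : Type} [DecidableEq Thread] [DecidableEq Lock]

/-- The initial state: all Tail and Grant fields are none, all threads in the remainder. -/
def initSt : St Thread Lock :=
  ⟨fun _ => none, fun _ => none, fun _ => .remainder, fun _ => none, fun _ => none⟩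

/-- One atomic transition of thread `t`. -/
inductive Step (t : Thread) : St Thread Lock → St Thread Lock → Prop where
  /-- a step inside the remainder section -/
  | remainderStay (s : St Thread Lock) (h : s.pc t = .remainder) :
      Step t s s
  /-- the entry doorstep for lock `L`: atomic SWAP on `Tail L`, storing the old value in `pred`;
      if the SWAP returned `none` the thread enters the critical section, else it spins -/
  | doorstep (s : St Thread Lock) (L : Lock) (h : s.pc t = .remainder) :
      Step t s ⟨Function.update s.Tail L (some t), s.Grant,
        Function.update s.pc t (if s.Tail L = none then .crit else .entrySpin),
        Function.update s.lk t (some L),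
        Function.update s.pred t (s.Tail L)⟩
  /-- entry-code busy-wait loop: read `Grant p`; it is not yet `some L`, keep spinning -/
  | spinWait (s : St Thread Lock) (p : Thread) (L : Lock)
      (h : s.pc t = .entrySpin) (hp : s.pred t = some p) (hl : s.lk t = some L)
      (hg : s.Grant p ≠ some L) :
      Step t s s
  /-- entry-code busy-wait loop: read `Grant p = some L`; write `Grant p := none`
      and enter the critical section -/
  | spinAcquire (s : St Thread Lock) (p : Thread) (L : Lock)
      (h : s.pc t = .entrySpin) (hp : s.pred t = some p) (hl : s.lk t = some L)
      (hg : s.Grant p = some L) :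
      Step t s ⟨s.Tail, Function.update s.Grant p none,
        Function.update s.pc t .crit, s.lk, s.pred⟩
  /-- a step inside the critical section -/
  | critStay (s : St Thread Lock) (h : s.pc t = .crit) :
      Step t s s
  /-- leave the critical section and begin the exit code -/
  | exitStart (s : St Thread Lock) (h : s.pc t = .crit) :
      Step t s ⟨s.Tail, s.Grant, Function.update s.pc t .exitCAS, s.lk, s.pred⟩
  /-- successful CAS: `Tail L = some self`, so set `Tail L := none` and
      complete the exit code, returning to the remainder section -/
  | casSucc (s : St Thread Lock) (L : Lock)
      (h : s.pc t = .exitCAS) (hl : s.lk t = some L) (ht : s.Tail L = some t) :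
      Step t s ⟨Function.update s.Tail L none, s.Grant,
        Function.update s.pc t .remainder, Function.update s.lk t none, s.pred⟩
  /-- failed CAS: `Tail L ≠ some self`; proceed to the exit doorstep -/
  | casFail (s : St Thread Lock) (L : Lock)
      (h : s.pc t = .exitCAS) (hl : s.lk t = some L) (ht : s.Tail L ≠ some t) :
      Step t s ⟨s.Tail, s.Grant, Function.update s.pc t .exitDoor, s.lk, s.pred⟩
  /-- the exit doorstep: write `Grant self := some L` and start spinning on `Grant self` -/
  | exitDoorstep (s : St Thread Lock) (L : Lock)
      (h : s.pc t = .exitDoor) (hl : s.lk t = some L) :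
      Step t s ⟨s.Tail, Function.update s.Grant t (some L),
        Function.update s.pc t .exitSpin, s.lk, s.pred⟩
  /-- exit-code busy-wait loop: read `Grant self`; it is not yet `none`, keep spinning -/
  | exitSpinWait (s : St Thread Lock) (h : s.pc t = .exitSpin) (hg : s.Grant t ≠ none) :
      Step t s s
  /-- exit-code busy-wait loop: read `Grant self = none`; complete the exit code,
      returning to the remainder section -/
  | exitDone (s : St Thread Lock) (h : s.pc t = .exitSpin) (hg : s.Grant t = none) :
      Step t s ⟨s.Tail, s.Grant, Function.update s.pc t .remainder,
        Function.update s.lk t none, s.pred⟩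

/-- An execution of the Hemlock transition system: an infinite sequence of states starting
    from the initial state, where each step is one transition of the scheduled thread;
    every thread whose program counter is in the entry, exit or critical section eventually
    takes another step, and every thread leaves each critical section after finitely
    many steps. -/
structure Execution (Thread Lock : Type) [DecidableEq Thread] [DecidableEq Lock]
    [Fintype Thread] where
  states : ℕ → St Thread Lock
  sched : ℕ → Thread
  init : states 0 = initSt
  steps : ∀ n, Step (sched n) (states n) (states (n + 1))
  fair : ∀ n t, (states n).pc t ≠ PC.remainder → ∃ m, n ≤ m ∧ sched m = t
  critFinite : ∀ n t, (states n).pc t = PC.crit → ∃ m, n ≤ m ∧ (states m).pc t ≠ PC.crit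

variable [Fintype Thread]

/-- Thread `t` executes the entry doorstep (the SWAP) for lock `L` at time `n`. -/
def doorstepAt (E : Execution Thread Lock) (n : ℕ) (t : Thread) (L : Lock) : Prop :=
  E.sched n = t ∧ (E.states n).pc t = PC.remainder ∧
    (E.states (n + 1)).pc t ≠ PC.remainder ∧ (E.states (n + 1)).lk t = some L

/-- Thread `t` performs the CAS step of the exit code for lock `L` at time `n`
    (successful or not). -/
def casAt (E : Execution Thread Lock) (n : ℕ) (t : Thread) (L : Lock) : Prop :=
  E.sched n = t ∧ (E.states n).pc t = PC.exitCAS ∧ (E.states n).lk t = some L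

/-- Thread `t` performs the exit doorstep (the write `Grant t := some L`) at time `n`. -/
def exitDoorAt (E : Execution Thread Lock) (n : ℕ) (t : Thread) (L : Lock) : Prop :=
  E.sched n = t ∧ (E.states n).pc t = PC.exitDoor ∧ (E.states n).lk t = some L

/-- Thread `t` is in the critical section protected by `L` in state `s`. -/
def inCS (s : St Thread Lock) (t : Thread) (L : Lock) : Prop :=
  s.pc t = PC.crit ∧ s.lk t = some L

/-- Thread `t` is in the entry code for lock `L` in state `s`. -/
def inEntry (s : St Thread Lock) (t : Thread) (L : Lock) : Prop :=
  s.pc t = PC.entrySpin ∧ s.lk t = some L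

/-- Thread `t` enters the critical section protected by `L` at step `m`. -/
def entersCSAt (E : Execution Thread Lock) (m : ℕ) (t : Thread) (L : Lock) : Prop :=
  E.sched m = t ∧ (E.states m).pc t ≠ PC.crit ∧
    (E.states (m + 1)).pc t = PC.crit ∧ (E.states (m + 1)).lk t = some L

/-- Thread `t` completes its critical section protected by `L` at step `k`
    (leaving the critical section and beginning the exit code). -/
def exitsCSAt (E : Execution Thread Lock) (k : ℕ) (t : Thread) (L : Lock) : Prop :=
  E.sched k = t ∧ (E.states k).pc t = PC.crit ∧ (E.states k).lk t = some L ∧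
    (E.states (k + 1)).pc t ≠ PC.crit

/-- Thread `t` completes the exit code for lock `L` at step `k`
    (returning to the remainder section). -/
def completesExitAt (E : Execution Thread Lock) (k : ℕ) (t : Thread) (L : Lock) : Prop :=
  E.sched k = t ∧ (E.states k).lk t = some L ∧
    (E.states k).pc t ≠ PC.remainder ∧ (E.states (k + 1)).pc t = PC.remainder

/-- `m` is the first time at or after `n` at which thread `t` enters the
    critical section protected by `L`. -/
def firstEntryAfter (E : Execution Thread Lock) (n m : ℕ) (t : Thread) (L : Lock) : Prop :=
  n ≤ m ∧ entersCSAt E m t L ∧ ∀ k, n ≤ k → k < m → ¬ entersCSAt E k t L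

/-- At time `n`, thread `T` is spinning in the entry code waiting for `Grant w`
    to become `some L`: its next step reads `Grant w` inside the entry-code
    busy-wait loop with current lock `L` and `pred = some w`. -/
def spinningEntryFor (E : Execution Thread Lock) (n : ℕ) (T w : Thread) (L : Lock) : Prop :=
  (E.states n).pc T = PC.entrySpin ∧ (E.states n).pred T = some w ∧
    (E.states n).lk T = some L

/-- At time `n`, thread `T` is spinning on the word `Grant w`: its next step reads
    `Grant w` inside one of the two busy-wait loops (the entry-code loop with
    `pred = some w`, or the exit-code loop executed by `w` itself). -/
def spinningOn (E : Execution Thread Lock) (n : ℕ) (T w : Thread) : Prop :=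
  ((E.states n).pc T = PC.entrySpin ∧ (E.states n).pred T = some w) ∨
    (T = w ∧ (E.states n).pc T = PC.exitSpin)

/-- Lock `L` is associated with thread `T` at time `n`: `T` has executed the entry
    doorstep for `L` and has not yet completed the exit code for `L`. -/
def associated (E : Execution Thread Lock) (n : ℕ) (T : Thread) (L : Lock) : Prop :=
  ∃ m, m < n ∧ doorstepAt E m T L ∧ ∀ k, m < k → k < n → ¬ completesExitAt E k T L

/-! ### Auxiliary invariant machinery -/

section AuxInv

/-- Thread `T` is *active* for lock `L`: it has performed the entry doorstep for `L`
but has not yet performed the CAS step of the exit code. -/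
def Active (s : St Thread Lock) (T : Thread) (L : Lock) : Prop :=
  s.lk T = some L ∧ (s.pc T = PC.entrySpin ∨ s.pc T = PC.crit ∨ s.pc T = PC.exitCAS)

/-- `p` is an exiting predecessor for lock `L`. -/
def ExitCond (s : St Thread Lock) (p : Thread) (L : Lock) : Prop :=
  s.lk p = some L ∧
    ((s.pc p = PC.exitDoor ∧ s.Grant p = none) ∨
     (s.pc p = PC.exitSpin ∧ s.Grant p = some L))

/-- The queue invariant for lock `L`: `q` lists the active threads in doorstep order. -/
structure QInv (s : St Thread Lock) (L : Lock) (q : List Thread) : Prop where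
  mem : ∀ T, T ∈ q ↔ Active s T L
  nodup : q.Nodup
  tl : s.Tail L = q.getLast?
  chain : q.Chain' (fun a b => s.pc b = PC.entrySpin ∧ s.pred b = some a)
  head : ∀ x, q.head? = some x → s.pc x = PC.entrySpin →
    ∃ p, s.pred x = some p ∧ ExitCond s p L

/-- The global inductive invariant. -/
structure Inv (s : St Thread Lock) : Prop where
  lkRem : ∀ T, s.pc T = PC.remainder ↔ s.lk T = none
  grant : ∀ T L', s.Grant T = some L' → s.pc T = PC.exitSpin ∧ s.lk T = some L'
  queue : ∀ L, ∃ q, QInv s L q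

private lemma chain'_mono_tail {α : Type*} {R R' : α → α → Prop} :
    ∀ (l : List α), List.Chain' R l → (∀ a, ∀ b ∈ l.tail, R a b → R' a b) →
      List.Chain' R' l
  | [], _, _ => List.isChain_nil
  | x :: l, h, H => by
      rw [List.Chain', List.isChain_cons] at h ⊢
      refine ⟨fun y hy => H x y (List.mem_of_mem_head? hy) (h.1 y hy), ?_⟩
      exact chain'_mono_tail l h.2 fun a b hb => H a b (List.tail_subset l hb)

private lemma mem_chain'_cases {α : Type*} {R : α → α → Prop} :
    ∀ {l : List α}, List.Chain' R l → ∀ x ∈ l, l.head? = some x ∨ ∃ a ∈ l, R a x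
  | [], _, x, hx => absurd hx List.not_mem_nil
  | y :: l, h, x, hx => by
      rcases List.mem_cons.1 hx with rfl | hx'
      · exact Or.inl rfl
      · rw [List.Chain', List.isChain_cons] at h
        rcases mem_chain'_cases h.2 x hx' with hh | ⟨a, ha, hr⟩
        · exact Or.inr ⟨y, List.mem_cons_self, h.1 x hh⟩
        · exact Or.inr ⟨a, List.mem_cons_of_mem _ ha, hr⟩

private lemma eq_singleton_of_head_last {α : Type*} {l : List α} {t : α} (hn : l.Nodup)
    (hh : l.head? = some t) (hl : l.getLast? = some t) : l = [t] := by
  cases l with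
  | nil => simp at hh
  | cons y rest =>
    obtain rfl : y = t := by simpa using hh
    cases rest with
    | nil => rfl
    | cons r rs =>
      rw [List.getLast?_cons_cons] at hl
      obtain ⟨hne, rfl⟩ := List.mem_getLast?_eq_getLast hl
      exact absurd (List.getLast_mem hne) (List.nodup_cons.1 hn).1

private lemma QInv.transfer {s s' : St Thread Lock} {L : Lock} {q : List Thread}
    (Q : QInv s L q)
    (hact : ∀ T, Active s' T L ↔ Active s T L)
    (htail : s'.Tail L = s.Tail L)
    (hpcq : ∀ T ∈ q, s.pc T = PC.entrySpin → s'.pc T = PC.entrySpin)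
    (hpc' : ∀ x, q.head? = some x → s'.pc x = PC.entrySpin → s.pc x = PC.entrySpin)
    (hpredq : ∀ T ∈ q, s'.pred T = s.pred T)
    (hex : ∀ p, ExitCond s p L → ExitCond s' p L) :
    QInv s' L q := by
  refine ⟨fun T => (Q.mem T).trans (hact T).symm, Q.nodup, htail.trans Q.tl, ?_, ?_⟩
  · refine chain'_mono_tail q Q.chain fun a b hb hr => ?_
    have hbq : b ∈ q := List.tail_subset q hb
    exact ⟨hpcq b hbq hr.1, (hpredq b hbq).trans hr.2⟩
  · intro x hx hpcx
    have hxq : x ∈ q := List.mem_of_mem_head? hx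
    obtain ⟨p, hp, hpe⟩ := Q.head x hx (hpc' x hx hpcx)
    exact ⟨p, (hpredq x hxq).trans hp, hex p hpe⟩

set_option linter.unusedSectionVars false

private lemma inv_init : Inv (initSt : St Thread Lock) := by
  refine ⟨fun T => by simp [initSt], fun T L' h => by simp [initSt] at h,
    fun L => ⟨[], fun T => by simp [Active, initSt], by simp, by simp [initSt],
      List.isChain_nil, fun x hx => by simp at hx⟩⟩

private lemma inv_step {t : Thread} {s s' : St Thread Lock} (h : Step t s s') (I : Inv s) :
    Inv s' := by
  obtain ⟨lkRem, grant, queue⟩ := I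
  cases h with
  | remainderStay h => exact ⟨lkRem, grant, queue⟩
  | spinWait p L0 h hp hl hg => exact ⟨lkRem, grant, queue⟩
  | critStay h => exact ⟨lkRem, grant, queue⟩
  | exitSpinWait h hg => exact ⟨lkRem, grant, queue⟩
  | doorstep L0 hpc =>
    have hlkt : s.lk t = none := (lkRem t).1 hpc
    refine ⟨?_, ?_, ?_⟩
    · intro T
      by_cases hT : T = t
      · subst hT
        simp only [Function.update_self]
        split <;> simp
      · simp only [Function.update_of_ne hT]
        exact lkRem T
    · intro T L' hg
      obtain ⟨h1, h2⟩ := grant T L' hg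
      have hTt : T ≠ t := fun he => by rw [he, hpc] at h1; exact PC.noConfusion h1
      simp only [Function.update_of_ne hTt]
      exact ⟨h1, h2⟩
    · intro L
      obtain ⟨q, Q⟩ := queue L
      have htq : t ∉ q := fun hq => by
        have := ((Q.mem t).1 hq).1
        rw [hlkt] at this; exact absurd this (by simp)
      by_cases hL : L = L0
      · subst hL
        refine ⟨q ++ [t], ?_, ?_, ?_, ?_, ?_⟩
        · intro T
          by_cases hT : T = t
          · subst hT
            simp only [List.mem_append, List.mem_singleton, or_true, true_iff]
            refine ⟨by simp, ?_⟩
            simp only [Function.update_self]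
            split
            · exact Or.inr (Or.inl rfl)
            · exact Or.inl rfl
          · simp only [List.mem_append, List.mem_singleton, hT, or_false]
            rw [Q.mem T]
            unfold Active
            simp only [Function.update_of_ne hT]
        · simp [List.nodup_append, Q.nodup, htq]
          exact fun a ha he => htq (he ▸ ha)
        · simp only [Function.update_self, List.getLast?_concat]
        · rw [List.Chain', List.isChain_append]
          refine ⟨?_, List.isChain_singleton t, ?_⟩
          · refine chain'_mono_tail q Q.chain fun a b hb hr => ?_
            have hbq : b ∈ q := List.tail_subset q hb
            have hbt : b ≠ t := fun he => htq (he ▸ hbq)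
            simp only [Function.update_of_ne hbt]
            exact hr
          · intro x hx y hy
            obtain rfl : t = y := by simpa using hy
            have hTx : s.Tail L = some x := Q.tl.trans hx
            constructor
            · simp only [Function.update_self, hTx]
              simp
            · simp only [Function.update_self, hTx]
        · intro x hx hpcx
          cases hq : q with
          | nil =>
            subst hq
            obtain rfl : t = x := by simpa using hx
            have hTn : s.Tail L = none := by simpa using Q.tl
            simp only [Function.update_self, hTn] at hpcx
            simp at hpcx
          | cons y ys =>
            subst hq
            obtain rfl : y = x := by simpa using hx
            have hyq : y ∈ y :: ys := List.mem_cons_self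
            have hyt : y ≠ t := fun he => htq (he ▸ hyq)
            simp only [Function.update_of_ne hyt] at hpcx
            obtain ⟨p, hp, hpl, hpe⟩ := Q.head y rfl hpcx
            have hpt : p ≠ t := fun he => by
              rw [he, hlkt] at hpl; exact absurd hpl (by simp)
            refine ⟨p, ?_, ?_, ?_⟩
            · simp only [Function.update_of_ne hyt]; exact hp
            · simp only [Function.update_of_ne hpt]; exact hpl
            · simpa only [Function.update_of_ne hpt] using hpe
      · refine ⟨q, Q.transfer ?_ ?_ ?_ ?_ ?_ ?_⟩
        · intro T
          by_cases hT : T = t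
          · subst hT
            unfold Active
            simp only [Function.update_self, hlkt]
            constructor
            · rintro ⟨h1, -⟩; exact absurd (Option.some.inj h1).symm hL
            · rintro ⟨h1, -⟩; exact absurd h1 (by simp)
          · unfold Active
            simp only [Function.update_of_ne hT]
        · exact Function.update_of_ne hL _ _
        · intro T hTq hT
          have : T ≠ t := fun he => htq (he ▸ hTq)
          simp only [Function.update_of_ne this]; exact hT
        · intro x hx h1
          have hxq : x ∈ q := List.mem_of_mem_head? hx
          have : x ≠ t := fun he => htq (he ▸ hxq)
          simp only [Function.update_of_ne this] at h1; exact h1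
        · intro T hTq
          have : T ≠ t := fun he => htq (he ▸ hTq)
          simp only [Function.update_of_ne this]
        · intro p hpe
          have hpt : p ≠ t := fun he => by
            have h1 := hpe.1; rw [he, hlkt] at h1; exact absurd h1 (by simp)
          unfold ExitCond
          simp only [Function.update_of_ne hpt]
          exact hpe
  | spinAcquire p L0 hpc hp hl hg =>
    obtain ⟨hgp, hgl⟩ := grant p L0 hg
    have hpt : p ≠ t := fun he => by rw [he, hpc] at hgp; exact PC.noConfusion hgp
    refine ⟨?_, ?_, ?_⟩
    · intro T
      by_cases hT : T = t
      · subst hT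
        simp only [Function.update_self, hl]
        simp
      · simp only [Function.update_of_ne hT]
        exact lkRem T
    · intro T L' hgT
      by_cases hTp : T = p
      · subst hTp
        simp only [Function.update_self] at hgT
        exact absurd hgT (by simp)
      · simp only [Function.update_of_ne hTp] at hgT
        obtain ⟨h1, h2⟩ := grant T L' hgT
        have hTt : T ≠ t := fun he => by rw [he, hpc] at h1; exact PC.noConfusion h1
        simp only [Function.update_of_ne hTt]
        exact ⟨h1, h2⟩
    · intro L
      obtain ⟨q, Q⟩ := queue L
      by_cases hL : L = L0
      · subst hL
        have htq : t ∈ q := (Q.mem t).2 ⟨hl, Or.inl hpc⟩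
        have hhd : q.head? = some t := by
          rcases mem_chain'_cases Q.chain t htq with hh | ⟨a, haq, hr⟩
          · exact hh
          · obtain rfl : a = p := by
              have := hr.2.symm.trans hp
              exact Option.some.inj this
            have := ((Q.mem a).1 haq).2
            rw [hgp] at this
            rcases this with h'|h'|h' <;> exact absurd h' (by simp)
        obtain ⟨rest, rfl⟩ : ∃ rest, q = t :: rest := by
          cases q with
          | nil => simp at hhd
          | cons y ys => exact ⟨ys, by rw [Option.some.inj (by simpa using hhd : some y = some t)]⟩
        have htrest : t ∉ rest := (List.nodup_cons.1 Q.nodup).1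
        refine ⟨t :: rest, ?_, Q.nodup, Q.tl, ?_, ?_⟩
        · intro T
          by_cases hT : T = t
          · subst hT
            simp only [List.mem_cons, true_or, true_iff]
            exact ⟨hl, Or.inr (Or.inl (by simp only [Function.update_self]))⟩
          · rw [Q.mem T]
            unfold Active
            simp only [Function.update_of_ne hT]
        · have hch := Q.chain
          rw [List.Chain', List.isChain_cons] at hch ⊢
          obtain ⟨hch1, hch2⟩ := hch
          constructor
          · intro y hy
            have hyr : y ∈ rest := List.mem_of_mem_head? hy
            have hyt : y ≠ t := fun he => htrest (he ▸ hyr)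
            have := hch1 y hy
            simp only [Function.update_of_ne hyt]
            exact this
          · refine chain'_mono_tail rest hch2 fun a b hb hr => ?_
            have hbq : b ∈ rest := List.tail_subset rest hb
            have hbt : b ≠ t := fun he => htrest (he ▸ hbq)
            simp only [Function.update_of_ne hbt]
            exact hr
        · intro x hx hpcx
          obtain rfl : t = x := by simpa using hx
          simp only [Function.update_self] at hpcx
          exact absurd hpcx (by simp)
      · have htq : t ∉ q := fun hq => by
          have := ((Q.mem t).1 hq).1
          rw [hl] at this
          exact hL (Option.some.inj this).symm
        refine ⟨q, Q.transfer ?_ rfl ?_ ?_ (fun T hTq => rfl) ?_⟩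
        · intro T
          by_cases hT : T = t
          · subst hT
            unfold Active
            simp only [Function.update_self, hl]
            constructor
            · rintro ⟨h1, -⟩; exact absurd (Option.some.inj h1).symm hL
            · rintro ⟨h1, -⟩; exact absurd (Option.some.inj h1).symm hL
          · unfold Active
            simp only [Function.update_of_ne hT]
        · intro T hTq hT
          have hTt : T ≠ t := fun he => htq (he ▸ hTq)
          simp only [Function.update_of_ne hTt]; exact hT
        · intro x hx h1
          by_cases hxt : x = t
          · subst hxt
            simp only [Function.update_self] at h1
            exact absurd h1 (by simp)
          · simp only [Function.update_of_ne hxt] at h1; exact h1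
        · intro p' hpe
          have hp'p : p' ≠ p := fun he => by
            have h1 := hpe.1; rw [he, hgl] at h1
            exact hL (Option.some.inj h1).symm
          have hp't : p' ≠ t := fun he => by
            rcases hpe.2 with ⟨h', -⟩ | ⟨h', -⟩ <;> rw [he, hpc] at h' <;> exact PC.noConfusion h'
          unfold ExitCond
          simp only [Function.update_of_ne hp't, Function.update_of_ne hp'p]
          exact hpe
  | exitStart hpc =>
    have hlk : s.lk t ≠ none := fun hn => by
      have := (lkRem t).2 hn
      rw [hpc] at this; exact PC.noConfusion this
    refine ⟨?_, ?_, ?_⟩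
    · intro T
      by_cases hT : T = t
      · subst hT
        simp only [Function.update_self]
        constructor
        · intro h'; exact absurd h' (by simp)
        · intro h'; exact absurd h' hlk
      · simp only [Function.update_of_ne hT]
        exact lkRem T
    · intro T L' hgT
      obtain ⟨h1, h2⟩ := grant T L' hgT
      have hTt : T ≠ t := fun he => by rw [he, hpc] at h1; exact PC.noConfusion h1
      simp only [Function.update_of_ne hTt]
      exact ⟨h1, h2⟩
    · intro L
      obtain ⟨q, Q⟩ := queue L
      refine ⟨q, Q.transfer ?_ rfl ?_ ?_ (fun T hTq => rfl) ?_⟩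
      · intro T
        by_cases hT : T = t
        · subst hT
          unfold Active
          simp only [Function.update_self, hpc]
          simp
        · unfold Active
          simp only [Function.update_of_ne hT]
      · intro T hTq hT
        have hTt : T ≠ t := fun he => by
          rw [he, hpc] at hT; exact PC.noConfusion hT
        simp only [Function.update_of_ne hTt]; exact hT
      · intro x hx h1
        by_cases hxt : x = t
        · subst hxt
          simp only [Function.update_self] at h1
          exact absurd h1 (by simp)
        · simp only [Function.update_of_ne hxt] at h1; exact h1
      · intro p hpe
        have hpt : p ≠ t := fun he => by
          rcases hpe.2 with ⟨h', -⟩ | ⟨h', -⟩ <;> rw [he, hpc] at h' <;> exact PC.noConfusion h'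
        unfold ExitCond
        simp only [Function.update_of_ne hpt]
        exact hpe
  | casSucc L0 hpc hl ht =>
    have hgt : s.Grant t = none := by
      cases hG : s.Grant t with
      | none => rfl
      | some L' =>
        have := (grant t L' hG).1
        rw [hpc] at this; exact absurd this (by simp)
    refine ⟨?_, ?_, ?_⟩
    · intro T
      by_cases hT : T = t
      · subst hT; simp
      · simp only [Function.update_of_ne hT]
        exact lkRem T
    · intro T L' hgT
      obtain ⟨h1, h2⟩ := grant T L' hgT
      have hTt : T ≠ t := fun he => by rw [he, hpc] at h1; exact PC.noConfusion h1
      simp only [Function.update_of_ne hTt]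
      exact ⟨h1, h2⟩
    · intro L
      obtain ⟨q, Q⟩ := queue L
      by_cases hL : L = L0
      · subst hL
        have htq : t ∈ q := (Q.mem t).2 ⟨hl, Or.inr (Or.inr hpc)⟩
        have hhd : q.head? = some t := by
          rcases mem_chain'_cases Q.chain t htq with hh | ⟨a, haq, hr⟩
          · exact hh
          · rw [hr.1] at hpc; exact absurd hpc (by simp)
        have hq1 : q = [t] :=
          eq_singleton_of_head_last Q.nodup hhd (Q.tl.symm.trans ht)
        refine ⟨[], ?_, List.nodup_nil, ?_, List.isChain_nil, ?_⟩
        · intro T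
          simp only [List.not_mem_nil, false_iff]
          by_cases hT : T = t
          · subst hT
            rintro ⟨h1, -⟩
            simp only [Function.update_self] at h1
            exact absurd h1 (by simp)
          · intro hA
            have : T ∈ q := (Q.mem T).2 (by
              unfold Active at hA ⊢
              simpa only [Function.update_of_ne hT] using hA)
            rw [hq1] at this
            exact hT (by simpa using this)
        · simp
        · intro x hx; exact absurd hx (by simp)
      · refine ⟨q, Q.transfer ?_ ?_ ?_ ?_ (fun T hTq => rfl) ?_⟩
        · intro T
          by_cases hT : T = t
          · subst hT
            unfold Active
            simp only [Function.update_self, hl]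
            constructor
            · rintro ⟨h1, -⟩; exact absurd h1 (by simp)
            · rintro ⟨h1, -⟩; exact absurd (Option.some.inj h1).symm hL
          · unfold Active
            simp only [Function.update_of_ne hT]
        · exact Function.update_of_ne hL _ _
        · intro T hTq hT
          have hTt : T ≠ t := fun he => by
            rw [he, hpc] at hT; exact PC.noConfusion hT
          simp only [Function.update_of_ne hTt]; exact hT
        · intro x hx h1
          by_cases hxt : x = t
          · subst hxt
            simp only [Function.update_self] at h1
            exact absurd h1 (by simp)
          · simp only [Function.update_of_ne hxt] at h1; exact h1
        · intro p hpe
          have hpt : p ≠ t := fun he => by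
            rcases hpe.2 with ⟨h', -⟩ | ⟨h', -⟩ <;> rw [he, hpc] at h' <;> exact PC.noConfusion h'
          unfold ExitCond
          simp only [Function.update_of_ne hpt]
          exact hpe
  | casFail L0 hpc hl ht =>
    have hgt : s.Grant t = none := by
      cases hG : s.Grant t with
      | none => rfl
      | some L' =>
        have := (grant t L' hG).1
        rw [hpc] at this; exact absurd this (by simp)
    refine ⟨?_, ?_, ?_⟩
    · intro T
      by_cases hT : T = t
      · subst hT
        simp only [Function.update_self, hl]
        simp
      · simp only [Function.update_of_ne hT]
        exact lkRem T
    · intro T L' hgT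
      obtain ⟨h1, h2⟩ := grant T L' hgT
      have hTt : T ≠ t := fun he => by rw [he, hpc] at h1; exact PC.noConfusion h1
      simp only [Function.update_of_ne hTt]
      exact ⟨h1, h2⟩
    · intro L
      obtain ⟨q, Q⟩ := queue L
      by_cases hL : L = L0
      · subst hL
        have htq : t ∈ q := (Q.mem t).2 ⟨hl, Or.inr (Or.inr hpc)⟩
        have hhd : q.head? = some t := by
          rcases mem_chain'_cases Q.chain t htq with hh | ⟨a, haq, hr⟩
          · exact hh
          · rw [hr.1] at hpc; exact absurd hpc (by simp)
        obtain ⟨rest, rfl⟩ : ∃ rest, q = t :: rest := by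
          cases q with
          | nil => simp at hhd
          | cons y ys => exact ⟨ys, by rw [Option.some.inj (by simpa using hhd : some y = some t)]⟩
        have htrest : t ∉ rest := (List.nodup_cons.1 Q.nodup).1
        have hrne : rest ≠ [] := by
          rintro rfl
          exact ht (by simpa using Q.tl)
        obtain ⟨hch1, hch2⟩ := List.isChain_cons.1 Q.chain
        refine ⟨rest, ?_, (List.nodup_cons.1 Q.nodup).2, ?_, ?_, ?_⟩
        · intro T
          by_cases hT : T = t
          · subst hT
            simp only [htrest, false_iff]
            rintro ⟨-, h'⟩
            simp only [Function.update_self] at h'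
            rcases h' with h'|h'|h' <;> exact PC.noConfusion h'
          · constructor
            · intro hTr
              have := (Q.mem T).1 (List.mem_cons_of_mem _ hTr)
              unfold Active at this ⊢
              simpa only [Function.update_of_ne hT] using this
            · intro hA
              have : T ∈ t :: rest := (Q.mem T).2 (by
                unfold Active at hA ⊢
                simpa only [Function.update_of_ne hT] using hA)
              rcases List.mem_cons.1 this with h' | h'
              · exact absurd h' hT
              · exact h'
        · rw [Q.tl]
          cases rest with
          | nil => exact absurd rfl hrne
          | cons r rs => rw [List.getLast?_cons_cons]
        · refine chain'_mono_tail rest hch2 fun a b hb hr => ?_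
          have hbq : b ∈ rest := List.tail_subset rest hb
          have hbt : b ≠ t := fun he => htrest (he ▸ hbq)
          simp only [Function.update_of_ne hbt]
          exact hr
        · intro x hx hpcx
          have hxr : x ∈ rest := List.mem_of_mem_head? hx
          have hxt : x ≠ t := fun he => htrest (he ▸ hxr)
          have hR := hch1 x hx
          refine ⟨t, ?_, hl, Or.inl ⟨Function.update_self _ _ _, hgt⟩⟩
          exact hR.2
      · refine ⟨q, Q.transfer ?_ rfl ?_ ?_ (fun T hTq => rfl) ?_⟩
        · intro T
          by_cases hT : T = t
          · subst hT
            unfold Active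
            simp only [Function.update_self, hl]
            constructor
            · rintro ⟨-, h'⟩
              rcases h' with h'|h'|h' <;> exact PC.noConfusion h'
            · rintro ⟨h1, -⟩; exact absurd (Option.some.inj h1).symm hL
          · unfold Active
            simp only [Function.update_of_ne hT]
        · intro T hTq hT
          have hTt : T ≠ t := fun he => by
            rw [he, hpc] at hT; exact PC.noConfusion hT
          simp only [Function.update_of_ne hTt]; exact hT
        · intro x hx h1
          by_cases hxt : x = t
          · subst hxt
            simp only [Function.update_self] at h1
            exact absurd h1 (by simp)
          · simp only [Function.update_of_ne hxt] at h1; exact h1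
        · intro p hpe
          have hpt : p ≠ t := fun he => by
            rcases hpe.2 with ⟨h', -⟩ | ⟨h', -⟩ <;> rw [he, hpc] at h' <;> exact PC.noConfusion h'
          unfold ExitCond
          simp only [Function.update_of_ne hpt]
          exact hpe
  | exitDoorstep L0 hpc hl =>
    refine ⟨?_, ?_, ?_⟩
    · intro T
      by_cases hT : T = t
      · subst hT
        simp only [Function.update_self, hl]
        simp
      · simp only [Function.update_of_ne hT]
        exact lkRem T
    · intro T L' hgT
      by_cases hT : T = t
      · subst hT
        simp only [Function.update_self] at hgT
        obtain rfl : L0 = L' := Option.some.inj hgT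
        exact ⟨Function.update_self _ _ _, hl⟩
      · simp only [Function.update_of_ne hT] at hgT
        obtain ⟨h1, h2⟩ := grant T L' hgT
        have hTt : T ≠ t := hT
        simp only [Function.update_of_ne hTt]
        exact ⟨h1, h2⟩
    · intro L
      obtain ⟨q, Q⟩ := queue L
      have htq : t ∉ q := fun hq => by
        have := ((Q.mem t).1 hq).2
        rw [hpc] at this
        rcases this with h'|h'|h' <;> exact PC.noConfusion h'
      refine ⟨q, Q.transfer ?_ rfl ?_ ?_ (fun T hTq => rfl) ?_⟩
      · intro T
        by_cases hT : T = t
        · subst hT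
          unfold Active
          simp only [Function.update_self, hpc]
          constructor
          · rintro ⟨-, h'⟩
            rcases h' with h'|h'|h' <;> exact PC.noConfusion h'
          · rintro ⟨-, h'⟩
            rcases h' with h'|h'|h' <;> exact PC.noConfusion h'
        · unfold Active
          simp only [Function.update_of_ne hT]
      · intro T hTq hT
        have hTt : T ≠ t := fun he => htq (he ▸ hTq)
        simp only [Function.update_of_ne hTt]; exact hT
      · intro x hx h1
        have hxq : x ∈ q := List.mem_of_mem_head? hx
        have hxt : x ≠ t := fun he => htq (he ▸ hxq)
        simp only [Function.update_of_ne hxt] at h1; exact h1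
      · intro p hpe
        by_cases hpt : p = t
        · subst hpt
          obtain rfl : L = L0 := Option.some.inj (hpe.1.symm.trans hl)
          rcases hpe.2 with ⟨-, -⟩ | ⟨h', -⟩
          · exact ⟨hl, Or.inr ⟨Function.update_self _ _ _, Function.update_self _ _ _⟩⟩
          · rw [hpc] at h'; exact absurd h' (by simp)
        · unfold ExitCond
          simp only [Function.update_of_ne hpt]
          exact hpe
  | exitDone hpc hg =>
    refine ⟨?_, ?_, ?_⟩
    · intro T
      by_cases hT : T = t
      · subst hT; simp
      · simp only [Function.update_of_ne hT]
        exact lkRem T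
    · intro T L' hgT
      obtain ⟨h1, h2⟩ := grant T L' hgT
      have hTt : T ≠ t := fun he => by rw [he] at hgT; rw [hgT] at hg; exact absurd hg (by simp)
      simp only [Function.update_of_ne hTt]
      exact ⟨h1, h2⟩
    · intro L
      obtain ⟨q, Q⟩ := queue L
      have htq : t ∉ q := fun hq => by
        have := ((Q.mem t).1 hq).2
        rw [hpc] at this
        rcases this with h'|h'|h' <;> exact PC.noConfusion h'
      refine ⟨q, Q.transfer ?_ rfl ?_ ?_ (fun T hTq => rfl) ?_⟩
      · intro T
        by_cases hT : T = t
        · subst hT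
          unfold Active
          simp only [Function.update_self, hpc]
          constructor
          · rintro ⟨h1, -⟩; exact absurd h1 (by simp)
          · rintro ⟨-, h'⟩
            rcases h' with h'|h'|h' <;> exact PC.noConfusion h'
        · unfold Active
          simp only [Function.update_of_ne hT]
      · intro T hTq hT
        have hTt : T ≠ t := fun he => htq (he ▸ hTq)
        simp only [Function.update_of_ne hTt]; exact hT
      · intro x hx h1
        have hxq : x ∈ q := List.mem_of_mem_head? hx
        have hxt : x ≠ t := fun he => htq (he ▸ hxq)
        simp only [Function.update_of_ne hxt] at h1; exact h1
      · intro p hpe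
        have hpt : p ≠ t := fun he => by
          rw [he] at hpe
          rcases hpe.2 with ⟨h', -⟩ | ⟨-, h'⟩
          · rw [hpc] at h'; exact PC.noConfusion h'
          · rw [hg] at h'; exact absurd h' (by simp)
        unfold ExitCond
        simp only [Function.update_of_ne hpt]
        exact hpe

private lemma inv_states [Fintype Thread] (E : Execution Thread Lock) :
    ∀ n, Inv (E.states n)
  | 0 => by rw [E.init]; exact inv_init
  | n + 1 => inv_step (E.steps n) (inv_states E n)

private lemma step_other {t : Thread} {s s' : St Thread Lock} (h : Step t s s') {T : Thread}
    (hT : T ≠ t) : s'.pc T = s.pc T ∧ s'.lk T = s.lk T := by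
  cases h <;> simp [Function.update_of_ne hT]

private lemma active_step {t : Thread} {s s' : St Thread Lock} (h : Step t s s') {T : Thread}
    {L : Lock} (ha : Active s T L)
    (hcas : ¬ (t = T ∧ s.pc T = PC.exitCAS ∧ s.lk T = some L)) : Active s' T L := by
  by_cases hT : T = t
  · subst hT
    obtain ⟨hl, hpc⟩ := ha
    cases h with
    | remainderStay h => exact ⟨hl, hpc⟩
    | doorstep L0 h => rcases hpc with h' | h' | h' <;> rw [h] at h' <;> exact PC.noConfusion h'
    | spinWait p L0 h hp hl' hg => exact ⟨hl, hpc⟩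
    | spinAcquire p L0 h hp hl' hg =>
      exact ⟨hl, Or.inr (Or.inl (by simp only [Function.update_self]))⟩
    | critStay h => exact ⟨hl, hpc⟩
    | exitStart h =>
      exact ⟨hl, Or.inr (Or.inr (by simp only [Function.update_self]))⟩
    | casSucc L0 h hl' ht => exact absurd ⟨rfl, h, hl⟩ hcas
    | casFail L0 h hl' ht => exact absurd ⟨rfl, h, hl⟩ hcas
    | exitDoorstep L0 h hl' =>
      rcases hpc with h' | h' | h' <;> rw [h] at h' <;> exact PC.noConfusion h'
    | exitSpinWait h hg =>
      rcases hpc with h' | h' | h' <;> rw [h] at h' <;> exact PC.noConfusion h'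
    | exitDone h hg =>
      rcases hpc with h' | h' | h' <;> rw [h] at h' <;> exact PC.noConfusion h'
  · obtain ⟨h1, h2⟩ := step_other h hT
    exact ⟨by rw [h2]; exact ha.1, by rw [h1]; exact ha.2⟩

private lemma doorstep_active {t : Thread} {s s' : St Thread Lock} (h : Step t s s') {L : Lock}
    (hr : s.pc t = PC.remainder) (hnr : s'.pc t ≠ PC.remainder) (hlk : s'.lk t = some L) :
    Active s' t L := by
  cases h with
  | remainderStay h => exact absurd hr hnr
  | doorstep L0 h =>
    obtain rfl : L0 = L := by
      have := hlk
      simp only [Function.update_self] at this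
      exact Option.some.inj this
    refine ⟨hlk, ?_⟩
    simp only [Function.update_self]
    split
    · exact Or.inr (Or.inl rfl)
    · exact Or.inl rfl
  | spinWait p L0 h hp hl' hg => rw [h] at hr; exact PC.noConfusion hr
  | spinAcquire p L0 h hp hl' hg => rw [h] at hr; exact PC.noConfusion hr
  | critStay h => rw [h] at hr; exact PC.noConfusion hr
  | exitStart h => rw [h] at hr; exact PC.noConfusion hr
  | casSucc L0 h hl' ht => rw [h] at hr; exact PC.noConfusion hr
  | casFail L0 h hl' ht => rw [h] at hr; exact PC.noConfusion hr
  | exitDoorstep L0 h hl' => rw [h] at hr; exact PC.noConfusion hr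
  | exitSpinWait h hg => rw [h] at hr; exact PC.noConfusion hr
  | exitDone h hg => rw [h] at hr; exact PC.noConfusion hr

private lemma pending_active [Fintype Thread] (E : Execution Thread Lock) {T : Thread}
    {L : Lock} {m : ℕ} : ∀ {n : ℕ}, m < n → doorstepAt E m T L →
    (∀ k, m < k → k < n → ¬ casAt E k T L) → Active (E.states n) T L := by
  intro n
  induction n with
  | zero => omega
  | succ n ih =>
    intro hmn hd hc
    rcases Nat.lt_or_ge m n with hlt | hge
    · have ha : Active (E.states n) T L := ih hlt hd fun k h1 h2 => hc k h1 (by omega)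
      refine active_step (E.steps n) ha ?_
      rintro ⟨h1, h2, h3⟩
      exact hc n hlt (Nat.lt_succ_self n) ⟨h1, h2, h3⟩
    · obtain rfl : m = n := by omega
      obtain ⟨hs, h1, h2, h3⟩ := hd
      have hst := E.steps m
      rw [hs] at hst
      exact doorstep_active hst h1 h2 h3

end AuxInv

/-- If `Tail L = none` at a reachable state, then there is no thread that has executed
the entry doorstep for `L` but has not yet performed the CAS step of the exit code
for `L`; in particular, no thread is in the critical section protected by `L`. -/
theorem tail_none_no_pending {Thread Lock : Type} [DecidableEq Thread] [DecidableEq Lock]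
    [Fintype Thread] (E : Execution Thread Lock) (L : Lock) (n : ℕ)
    (h : (E.states n).Tail L = none) :
    (¬ ∃ (T : Thread) (m : ℕ), m < n ∧ doorstepAt E m T L ∧
        ∀ k, m < k → k < n → ¬ casAt E k T L) ∧
    (∀ T : Thread, ¬ inCS (E.states n) T L) := by
  obtain ⟨q, Q⟩ := (inv_states E n).queue L
  have hq : q = [] := List.getLast?_eq_none_iff.1 (Q.tl.symm.trans h)
  have hnoact : ∀ T, ¬ Active (E.states n) T L := by
    intro T hT
    have := (Q.mem T).2 hT
    rw [hq] at this
    exact List.not_mem_nil this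
  constructor
  · rintro ⟨T, m, hm, hd, hc⟩
    exact hnoact T (pending_active E hm hd hc)
  · intro T hT
    exact hnoact T ⟨hT.2, Or.inr (Or.inl hT.1)⟩

end Hemlock
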